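/- (Theorem 3, 1-D exact form.) Let M, L, N be integers with 1 ≤ L ≤ M−1 and m = M−L+1 ≥ 2, let μ ∈ ℝ, let s ∈ ℂ^N with s ≠ 0, and let σ > 0. Define: ā ∈ ℂ^M with ā_k = exp(i(k−(M−1)/2)μ), k = 0,…,M−1; the subarray selection matrices J_ℓ ∈ ℝ^{m×M}, ℓ = 1,…,L; a = J_1 ā ∈ ℂ^m; a_L ∈ ℂ^L with (a_L)_ℓ = exp(i(ℓ−1)μ); s_L = a_L ⊗ s ∈ ℂ^{NL}; u = a/√m; v = conj(s_L)/‖s_L‖; σ_1 = √m·‖s_L‖; the projector P = I_m − a a^H/m; the maximal-overlap selectors K_1 = [I_{m−1}, 0], K_2 = [0, I_{m−1}] ∈ ℝ^{(m−1)×m}; the row vector r^T = ((K_1 u)^H/‖K_1 u‖²) · (exp(−iμ)·K_2 − K_1) ∈ ℂ^{1×m}; the matrix W = (σ_1^{−1} vᵀ) ⊗ P ∈ ℂ^{m×mNL}; the vector z = Wᵀ r ∈ ℂ^{mNL}; the stacked selection matrix 𝕄 ∈ ℝ^{mNL×MN} obtained by vertically stacking (I_N ⊗ J_ℓ) for ℓ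 = 1,…,L; and the smoothed noise covariance R_SS = σ²·𝕄 𝕄ᵀ. Then the first-order MSE expression of 1-D Standard ESPRIT with spatial smoothing evaluates exactly to (1/2)·z^H R_SS z = (σ²/‖s‖²) · min{L, M−L} / ((M−L)² L²). -/

import Mathlib

open Matrix Complex

/-- Centered Vandermonde steering vector `ā(μ) ∈ ℂ^M`: `ā_k = exp(i(k-(M-1)/2)μ)`. -/
noncomputable def abar (M : ℕ) (μ : ℝ) : Fin M → ℂ :=
  fun k => Complex.exp (Complex.I * (((k : ℝ) - ((M : ℝ) - 1) / 2) : ℝ) * (μ : ℂ))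

/-- Subarray selection matrix with (0-based) shift `ℓ`:
`(sel M L ℓ)_{p,q} = 1` iff `q = p + ℓ` (so the 1-based `J_ℓ` is `sel M L (ℓ-1)`). -/
def sel (M L ℓ : ℕ) : Matrix (Fin (M - L + 1)) (Fin M) ℂ :=
  Matrix.of fun p q => if (q : ℕ) = (p : ℕ) + ℓ then 1 else 0

/-- Euclidean norm of a complex vector. -/
noncomputable def vecEnorm {ι : Type*} [Fintype ι] (x : ι → ℂ) : ℝ :=
  Real.sqrt (∑ i, Complex.normSq (x i))

/-- First-subarray steering vector `a = J₁ ā ∈ ℂ^m`, `m = M - L + 1`. -/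
noncomputable def avec (M L : ℕ) (μ : ℝ) : Fin (M - L + 1) → ℂ :=
  sel M L 0 *ᵥ abar M μ

/-- Smoothed symbol vector `s_L = a_L ⊗ s ∈ ℂ^{NL}` with `(a_L)_ℓ = exp(i(ℓ-1)μ)`,
indexed by `Fin L × Fin N`. -/
noncomputable def sLvec (L N : ℕ) (μ : ℝ) (s : Fin N → ℂ) : Fin L × Fin N → ℂ :=
  fun c => Complex.exp (Complex.I * ((c.1 : ℕ) : ℂ) * (μ : ℂ)) * s c.2

/-- Left singular vector `u = a/√m` of the noise-free smoothed data matrix. -/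
noncomputable def uvec (M L : ℕ) (μ : ℝ) : Fin (M - L + 1) → ℂ :=
  fun i => avec M L μ i / ((Real.sqrt ((M : ℝ) - (L : ℝ) + 1) : ℝ) : ℂ)

/-- Right singular vector `v = conj(s_L)/‖s_L‖`. -/
noncomputable def vvec (L N : ℕ) (μ : ℝ) (s : Fin N → ℂ) : Fin L × Fin N → ℂ :=
  fun c => star (sLvec L N μ s c) / ((vecEnorm (sLvec L N μ s) : ℝ) : ℂ)

/-- Singular value `σ₁ = √m ‖s_L‖`. -/
noncomputable def sigma1 (M L N : ℕ) (μ : ℝ) (s : Fin N → ℂ) : ℝ :=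
  Real.sqrt ((M : ℝ) - (L : ℝ) + 1) * vecEnorm (sLvec L N μ s)

/-- Orthogonal projector onto the noise subspace: `P = I_m - a aᴴ / m`. -/
noncomputable def Pproj (M L : ℕ) (μ : ℝ) :
    Matrix (Fin (M - L + 1)) (Fin (M - L + 1)) ℂ :=
  1 - (((M - L + 1 : ℕ) : ℂ))⁻¹ •
    Matrix.vecMulVec (avec M L μ) (star (avec M L μ))

/-- Maximum-overlap selector `K₁ = [I_{m-1}, 0]`. -/
def K1 (m : ℕ) : Matrix (Fin (m - 1)) (Fin m) ℂ :=
  Matrix.of fun p q => if (q : ℕ) = (p : ℕ) then 1 else 0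

/-- Maximum-overlap selector `K₂ = [0, I_{m-1}]`. -/
def K2 (m : ℕ) : Matrix (Fin (m - 1)) (Fin m) ℂ :=
  Matrix.of fun p q => if (q : ℕ) = (p : ℕ) + 1 then 1 else 0

/-- `w = K₁ u`. -/
noncomputable def wvec (M L : ℕ) (μ : ℝ) : Fin (M - L + 1 - 1) → ℂ :=
  K1 (M - L + 1) *ᵥ uvec M L μ

/-- The row vector `rᵀ = ((K₁u)ᴴ/‖K₁u‖²)(exp(-iμ)K₂ - K₁)`, stored as a vector. -/
noncomputable def rvec (M L : ℕ) (μ : ℝ) : Fin (M - L + 1) → ℂ :=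
  fun j => (((vecEnorm (wvec M L μ)) ^ 2 : ℝ) : ℂ)⁻¹ *
    (((fun p => star (wvec M L μ p)) ᵥ*
      (Complex.exp (-(Complex.I * (μ : ℂ))) • K2 (M - L + 1) - K1 (M - L + 1))) j)

/-- The matrix `W = (σ₁⁻¹ vᵀ) ⊗ P ∈ ℂ^{m × mNL}`, with column index `(ℓ, n, p)`. -/
noncomputable def Wmat (M L N : ℕ) (μ : ℝ) (s : Fin N → ℂ) :
    Matrix (Fin (M - L + 1)) (Fin L × Fin N × Fin (M - L + 1)) ℂ :=
  Matrix.of fun i c =>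
    ((sigma1 M L N μ s : ℝ) : ℂ)⁻¹ * vvec L N μ s (c.1, c.2.1) * Pproj M L μ i c.2.2

/-- The vector `z = Wᵀ r ∈ ℂ^{mNL}`. -/
noncomputable def zvec (M L N : ℕ) (μ : ℝ) (s : Fin N → ℂ) :
    Fin L × Fin N × Fin (M - L + 1) → ℂ :=
  (Wmat M L N μ s)ᵀ *ᵥ rvec M L μ

/-- Stacked selection matrix `𝕄 ∈ ℝ^{mNL × MN}`, vertically stacking `I_N ⊗ J_ℓ`
for `ℓ = 1, …, L` (row index `(ℓ, n, p)`, column index `(n', q)`). -/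
def Mstack (M L N : ℕ) : Matrix (Fin L × Fin N × Fin (M - L + 1)) (Fin N × Fin M) ℂ :=
  Matrix.of fun rI cI => if rI.2.1 = cI.1 then sel M L (rI.1 : ℕ) rI.2.2 cI.2 else 0

/-- Smoothed noise covariance matrix `R_SS = σ² 𝕄 𝕄ᵀ`. -/
noncomputable def RSS (M L N : ℕ) (σ : ℝ) :
    Matrix (Fin L × Fin N × Fin (M - L + 1)) (Fin L × Fin N × Fin (M - L + 1)) ℂ :=
  ((σ ^ 2 : ℝ) : ℂ) • (Mstack M L N * (Mstack M L N)ᵀ)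


/-!
With `m = M - L + 1` and `d = M - L`, the ESPRIT row vector is
`r = (√m / d) · conj(a) ⊙ (e_d - e_0)`. In particular `aᵀ r = 0`, so the noise projector fixes
`r` and `z = σ₁⁻¹ (v ⊗ r)`. Since `𝕄` is a real 0/1 matrix, `zᴴ R_SS z = σ² ‖𝕄ᵀ z‖²`, and
`𝕄ᵀ` adds up the `L` shifted copies of `z`: the phases of `v` and `r` merge into the phase of
`ā` at the position in the full array, and what remains is the correlation of `e_d - e_0` with a
window of length `L`, i.e. the indicator of `[d, M)` minus that of `[0, L)`. Its squared norm
counts the symmetric difference of the two windows, `2 min L d`, and the scalars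
`σ₁ ‖s_L‖ = √m · L ‖s‖²` combine with `√m / d` into `1 / (d L ‖s‖²)`.
-/

theorem sum_fin_ite_val_add_eq {R : Type*} [AddCommMonoid R] (n a j : ℕ) (F : ℕ → R) :
    ∑ p : Fin n, (if (p : ℕ) + a = j then F p else 0)
      = if a ≤ j ∧ j < n + a then F (j - a) else 0 := by
  rw [Fin.sum_univ_eq_sum_range (fun p => if p + a = j then F p else 0)]
  by_cases h : a ≤ j
  · simp_rw [show ∀ p, (p + a = j) = (p = j - a) from fun p => propext (by omega),
      Finset.sum_ite_eq', Finset.mem_range]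
    exact if_congr (by omega) rfl rfl
  · rw [if_neg (by omega)]
    exact Finset.sum_eq_zero fun p _ => if_neg (by omega)

theorem sum_fin_ite_val_eq {R : Type*} [AddCommMonoid R] (n j : ℕ) (F : ℕ → R) :
    ∑ p : Fin n, (if (p : ℕ) = j then F p else 0) = if j < n then F j else 0 := by
  simpa using sum_fin_ite_val_add_eq n 0 j F

theorem sum_range_ite_le_and_lt (n a b : ℕ) :
    ∑ k ∈ Finset.range n, (if a ≤ k ∧ k < b then (1 : ℝ) else 0) = (min n b - a : ℕ) := by
  induction n with
  | zero => simp
  | succ n ih =>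
    rw [Finset.sum_range_succ, ih]
    split_ifs with h
    · rw [show min (n + 1) b - a = min n b - a + 1 by omega]; push_cast; ring
    · rw [show min (n + 1) b - a = min n b - a by omega, add_zero]

theorem vecEnorm_sq {ι : Type*} [Fintype ι] (x : ι → ℂ) :
    vecEnorm x ^ 2 = ∑ i, normSq (x i) :=
  Real.sq_sqrt (Finset.sum_nonneg fun _ _ => normSq_nonneg _)

theorem vecEnorm_ne_zero {ι : Type*} [Fintype ι] {x : ι → ℂ} (hx : x ≠ 0) : vecEnorm x ≠ 0 := by
  intro h
  have hsum : ∑ i, normSq (x i) = 0 := by rw [← vecEnorm_sq, h, sq, mul_zero]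
  exact hx (funext fun i => normSq_eq_zero.1
    ((Finset.sum_eq_zero_iff_of_nonneg fun i _ => normSq_nonneg (x i)).1 hsum i
      (Finset.mem_univ i)))

theorem transpose_one_sub_smul_vecMulVec_mulVec {n R : Type*} [Fintype n] [DecidableEq n]
    [CommRing R] (c : R) (a b r : n → R) (h : a ⬝ᵥ r = 0) :
    (1 - c • vecMulVec a b)ᵀ *ᵥ r = r := by
  rw [transpose_sub, transpose_one, transpose_smul, transpose_vecMulVec, sub_mulVec, one_mulVec,
    smul_mulVec, vecMulVec_mulVec, h]
  simp

theorem star_dotProduct_mul_transpose_mulVec {m n : Type*} [Fintype m] [Fintype n]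
    (B : Matrix m n ℂ) (hB : Bᴴ = Bᵀ) (x : m → ℂ) :
    star x ⬝ᵥ ((B * Bᵀ) *ᵥ x) = ((∑ k, normSq ((Bᵀ *ᵥ x) k) : ℝ) : ℂ) := by
  have h : star x ᵥ* B = star (Bᴴ *ᵥ x) := by rw [star_mulVec, conjTranspose_conjTranspose]
  rw [← mulVec_mulVec, dotProduct_mulVec, h, ← hB]
  simp [dotProduct, normSq_eq_conj_mul_self]

def endpointDiff (n k : ℕ) : ℂ :=
  (if k = n then 1 else 0) - (if k = 0 then 1 else 0)

def windowDiff (n L q : ℕ) : ℂ :=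
  (if n ≤ q ∧ q < L + n then 1 else 0) - (if q < L then 1 else 0)

theorem sum_endpointDiff (n : ℕ) : ∑ k : Fin (n + 1), endpointDiff n k = 0 := by
  simp [endpointDiff, Finset.sum_sub_distrib, sum_fin_ite_val_eq _ _ (fun _ => (1 : ℂ))]

theorem sum_sum_ite_endpointDiff (n L q : ℕ) :
    ∑ ℓ : Fin L, ∑ p : Fin (n + 1), (if q = (p : ℕ) + ℓ then endpointDiff n p else 0)
      = windowDiff n L q := by
  have h : ∀ p : ℕ, ∑ ℓ : Fin L, (if q = p + ℓ then endpointDiff n p else 0)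
      = endpointDiff n p * if p ≤ q ∧ q < L + p then 1 else 0 := fun p => by
    simp_rw [show ∀ ℓ : ℕ, (q = p + ℓ) = (ℓ + p = q) from fun ℓ => propext (by omega)]
    rw [sum_fin_ite_val_add_eq L p q (fun _ => endpointDiff n p), mul_ite, mul_one, mul_zero]
  rw [Finset.sum_comm]
  simp only [h]
  simp only [endpointDiff, sub_mul, ite_mul, one_mul, zero_mul, Finset.sum_sub_distrib]
  rw [sum_fin_ite_val_eq _ _ (fun p => if p ≤ q ∧ q < L + p then (1 : ℂ) else 0),
    sum_fin_ite_val_eq _ _ (fun p => if p ≤ q ∧ q < L + p then (1 : ℂ) else 0)]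
  simp [windowDiff]

theorem sum_normSq_windowDiff (n L : ℕ) :
    ∑ q ∈ Finset.range (L + n), normSq (windowDiff n L q) = (2 * min L n : ℕ) := by
  have h : ∀ q ∈ Finset.range (L + n), normSq (windowDiff n L q)
      = (if max L n ≤ q ∧ q < L + n then 1 else 0) + (if 0 ≤ q ∧ q < min L n then 1 else 0) := by
    intro q hq
    rw [Finset.mem_range] at hq
    unfold windowDiff
    split_ifs <;> first | (exfalso; omega) | norm_num
  rw [Finset.sum_congr rfl h, Finset.sum_add_distrib, sum_range_ite_le_and_lt,
    sum_range_ite_le_and_lt, ← Nat.cast_add]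
  congr 1
  omega

noncomputable def steeringPhase (M : ℕ) (μ : ℝ) (k : ℕ) : ℂ :=
  exp (I * (((k : ℝ) - ((M : ℝ) - 1) / 2) : ℝ) * (μ : ℂ))

section SteeringPhase

variable {M : ℕ} {μ : ℝ}

theorem abar_apply (k : Fin M) : abar M μ k = steeringPhase M μ k := rfl

theorem steeringPhase_add (k l : ℕ) :
    steeringPhase M μ (k + l) = steeringPhase M μ k * exp (I * l * μ) := by
  rw [steeringPhase, steeringPhase, ← exp_add]
  congr 1
  push_cast
  ring

theorem norm_steeringPhase (k : ℕ) : ‖steeringPhase M μ k‖ = 1 := by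
  rw [steeringPhase, mul_assoc, ← ofReal_mul, norm_exp_I_mul_ofReal]

theorem steeringPhase_mul_star (k : ℕ) :
    steeringPhase M μ k * star (steeringPhase M μ k) = 1 := by
  rw [star_def, mul_conj, normSq_eq_norm_sq, norm_steeringPhase]
  norm_num

theorem star_steeringPhase_succ (k : ℕ) :
    star (steeringPhase M μ k) * exp (-(I * μ)) = star (steeringPhase M μ (k + 1)) := by
  rw [steeringPhase_add, star_mul', Nat.cast_one, mul_one, star_def, ← exp_conj]
  simp

end SteeringPhase

theorem conjTranspose_Mstack (M L N : ℕ) : (Mstack M L N)ᴴ = (Mstack M L N)ᵀ := by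
  ext
  simp only [conjTranspose_apply, transpose_apply, Mstack, sel, of_apply]
  split_ifs <;> simp

theorem Mstack_transpose_mulVec_apply {M L N : ℕ} (x : Fin L × Fin N × Fin (M - L + 1) → ℂ)
    (n : Fin N) (q : Fin M) :
    ((Mstack M L N)ᵀ *ᵥ x) (n, q)
      = ∑ ℓ : Fin L, ∑ p : Fin (M - L + 1), if (q : ℕ) = p + ℓ then x (ℓ, n, p) else 0 := by
  simp [mulVec, dotProduct, Mstack, sel, Fintype.sum_prod_type, ite_mul]

theorem vecEnorm_sLvec_sq {L N : ℕ} (μ : ℝ) (s : Fin N → ℂ) :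
    vecEnorm (sLvec L N μ s) ^ 2 = L * vecEnorm s ^ 2 := by
  have h : ∀ c : Fin L × Fin N, normSq (sLvec L N μ s c) = normSq (s c.2) := fun c => by
    rw [sLvec, normSq_mul, normSq_eq_norm_sq (exp _), mul_assoc, ← ofReal_natCast, ← ofReal_mul,
      norm_exp_I_mul_ofReal, one_pow, one_mul]
  simp [vecEnorm_sq, h, Fintype.sum_prod_type]

section SpatialSmoothing

variable {M L N : ℕ} {μ : ℝ} {s : Fin N → ℂ}

theorem avec_apply (hL : 1 ≤ L) (hLM : L ≤ M) (p : Fin (M - L + 1)) :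
    avec M L μ p = steeringPhase M μ p := by
  simp only [avec, mulVec, dotProduct, sel, of_apply, add_zero, ite_mul, one_mul, zero_mul,
    abar_apply]
  rw [sum_fin_ite_val_eq M p (steeringPhase M μ), if_pos (by omega)]

theorem wvec_apply (hL : 1 ≤ L) (hLM : L ≤ M) (p : Fin (M - L + 1 - 1)) :
    wvec M L μ p = steeringPhase M μ p / (√((M : ℝ) - L + 1) : ℂ) := by
  simp only [wvec, uvec, mulVec, dotProduct, K1, of_apply, ite_mul, one_mul, zero_mul,
    avec_apply hL hLM]
  rw [sum_fin_ite_val_eq _ p (fun q => steeringPhase M μ q / (√((M : ℝ) - L + 1) : ℂ)),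
    if_pos (by omega)]

theorem vecEnorm_wvec_sq (hL : 1 ≤ L) (hLM : L ≤ M) :
    vecEnorm (wvec M L μ) ^ 2 = (M - L : ℕ) / ((M : ℝ) - L + 1) := by
  have hx : 0 ≤ (M : ℝ) - L + 1 := by
    have : (L : ℝ) ≤ M := by exact_mod_cast hLM
    linarith
  have h : ∀ p, normSq (wvec M L μ p) = 1 / ((M : ℝ) - L + 1) := fun p => by
    rw [wvec_apply hL hLM, normSq_div, normSq_ofReal, Real.mul_self_sqrt hx, normSq_eq_norm_sq,
      norm_steeringPhase, one_pow]
  simp [vecEnorm_sq, h, div_eq_mul_inv]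

theorem rvec_apply (hL : 1 ≤ L) (hLM : L < M) (p : Fin (M - L + 1)) :
    rvec M L μ p = ((√((M : ℝ) - L + 1) / (M - L : ℕ) : ℝ) : ℂ) * star (steeringPhase M μ p)
      * endpointDiff (M - L) p := by
  simp only [rvec, vecMul, dotProduct, K1, K2, Matrix.sub_apply, Matrix.smul_apply, of_apply,
    smul_eq_mul, wvec_apply hL hLM.le, mul_sub, mul_ite, mul_one, mul_zero,
    Finset.sum_sub_distrib, eq_comm (a := (p : ℕ))]
  set x : ℝ := (M : ℝ) - L + 1
  set A : ℂ := star (steeringPhase M μ p) / (√x : ℂ)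
  have hp := p.isLt
  have hstar : star (√x : ℂ) = √x := conj_ofReal _
  have hsum : (if 1 ≤ (p : ℕ) ∧ (p : ℕ) < M - L + 1 - 1 + 1 then
        star (steeringPhase M μ (p - 1) / (√x : ℂ)) * exp (-(I * μ)) else 0)
      - (if (p : ℕ) < M - L + 1 - 1 then star (steeringPhase M μ p / (√x : ℂ)) else 0)
      = A * endpointDiff (M - L) p := by
    have hA : star (steeringPhase M μ p / (√x : ℂ)) = A := by rw [star_div₀, hstar]
    rw [endpointDiff, hA]
    by_cases h0 : (p : ℕ) = 0
    · simp [h0, show 0 ≠ M - L by omega, show 0 < M - L by omega]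
    · have hshift : star (steeringPhase M μ (p - 1) / (√x : ℂ)) * exp (-(I * μ)) = A := by
        rw [star_div₀, div_mul_eq_mul_div, star_steeringPhase_succ, Nat.sub_add_cancel (by omega),
          hstar]
      rw [if_pos (by omega), hshift, if_neg h0]
      by_cases hd : (p : ℕ) = M - L
      · simp [hd]
      · simp [hd, show (p : ℕ) < M - L by omega]
  have hscalar :
      ((vecEnorm (wvec M L μ) ^ 2 : ℝ) : ℂ)⁻¹ / (√x : ℂ) = ((√x / (M - L : ℕ) : ℝ) : ℂ) := by
    rw [vecEnorm_wvec_sq hL hLM.le, ← ofReal_inv, ← ofReal_div, inv_div, div_right_comm,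
      Real.div_sqrt]
  rw [sum_fin_ite_val_add_eq _ 1 _
      (fun i => star (steeringPhase M μ i / (√x : ℂ)) * exp (-(I * μ))),
    sum_fin_ite_val_eq _ _ (fun i => star (steeringPhase M μ i / (√x : ℂ))), ← mul_sub, hsum,
    ← hscalar]
  ring

theorem avec_dotProduct_rvec (hL : 1 ≤ L) (hLM : L < M) : avec M L μ ⬝ᵥ rvec M L μ = 0 := by
  have h : ∀ p, avec M L μ p * rvec M L μ p
      = ((√((M : ℝ) - L + 1) / (M - L : ℕ) : ℝ) : ℂ) * endpointDiff (M - L) p := fun p => by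
    rw [avec_apply hL hLM.le, rvec_apply hL hLM]
    linear_combination ((√((M : ℝ) - L + 1) / (M - L : ℕ) : ℝ) : ℂ) * endpointDiff (M - L) p
      * steeringPhase_mul_star (M := M) (μ := μ) p
  simp only [dotProduct, h, ← Finset.mul_sum, sum_endpointDiff, mul_zero]

theorem transpose_Pproj_mulVec_rvec (hL : 1 ≤ L) (hLM : L < M) :
    (Pproj M L μ)ᵀ *ᵥ rvec M L μ = rvec M L μ :=
  transpose_one_sub_smul_vecMulVec_mulVec _ _ _ _ (avec_dotProduct_rvec hL hLM)

theorem zvec_apply (hL : 1 ≤ L) (hLM : L < M) (c : Fin L × Fin N × Fin (M - L + 1)) :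
    zvec M L N μ s c
      = ((sigma1 M L N μ s : ℝ) : ℂ)⁻¹ * vvec L N μ s (c.1, c.2.1) * rvec M L μ c.2.2 := by
  have hP := congrFun (transpose_Pproj_mulVec_rvec (μ := μ) hL hLM) c.2.2
  simp only [mulVec, dotProduct, transpose_apply] at hP
  simp only [zvec, Wmat, mulVec, dotProduct, transpose_apply, of_apply, mul_assoc,
    ← Finset.mul_sum, hP]

theorem Mstack_transpose_mulVec_zvec (hL : 1 ≤ L) (hLM : L < M) (n : Fin N) (q : Fin M) :
    ((Mstack M L N)ᵀ *ᵥ zvec M L N μ s) (n, q)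
      = (((vecEnorm (sLvec L N μ s) ^ 2 * (M - L : ℕ))⁻¹ : ℝ) : ℂ) * star (s n)
        * star (steeringPhase M μ q) * windowDiff (M - L) L q := by
  set K : ℂ := (((vecEnorm (sLvec L N μ s) ^ 2 * (M - L : ℕ))⁻¹ : ℝ) : ℂ)
  have hK : ((sigma1 M L N μ s : ℝ) : ℂ)⁻¹ * ((vecEnorm (sLvec L N μ s) : ℝ) : ℂ)⁻¹
      * ((√((M : ℝ) - L + 1) / (M - L : ℕ) : ℝ) : ℂ) = K := by
    have hx : √((M : ℝ) - L + 1) ≠ 0 := by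
      have : (L : ℝ) < M := by exact_mod_cast hLM
      positivity
    rw [sigma1, ← ofReal_inv, ← ofReal_inv, ← ofReal_mul, ← ofReal_mul]
    congr 1
    calc _ = (√((M : ℝ) - L + 1))⁻¹ * √((M : ℝ) - L + 1)
          * (vecEnorm (sLvec L N μ s) ^ 2 * (M - L : ℕ))⁻¹ := by ring
      _ = _ := by rw [inv_mul_cancel₀ hx, one_mul]
  have h : ∀ (ℓ : Fin L) (p : Fin (M - L + 1)),
      (if (q : ℕ) = p + ℓ then zvec M L N μ s (ℓ, n, p) else 0)
        = K * star (s n) * star (steeringPhase M μ q)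
          * (if (q : ℕ) = p + ℓ then endpointDiff (M - L) p else 0) := fun ℓ p => by
    split_ifs with hq
    · rw [zvec_apply hL hLM, rvec_apply hL hLM, vvec, sLvec, hq, steeringPhase_add, ← hK]
      simp only [star_mul']
      ring
    · rw [mul_zero]
  simp only [Mstack_transpose_mulVec_apply, h, ← Finset.mul_sum, sum_sum_ite_endpointDiff]

theorem sum_normSq_Mstack_transpose_mulVec_zvec (hL : 1 ≤ L) (hLM : L < M) :
    ∑ d, normSq (((Mstack M L N)ᵀ *ᵥ zvec M L N μ s) d)
      = (L * vecEnorm s ^ 2 * (M - L : ℕ))⁻¹ ^ 2 * vecEnorm s ^ 2 * (2 * min L (M - L) : ℕ) := by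
  have h : ∀ n q, normSq (((Mstack M L N)ᵀ *ᵥ zvec M L N μ s) (n, q))
      = (L * vecEnorm s ^ 2 * (M - L : ℕ))⁻¹ ^ 2 * normSq (s n)
        * normSq (windowDiff (M - L) L q) := fun n q => by
    rw [Mstack_transpose_mulVec_zvec hL hLM, vecEnorm_sLvec_sq]
    simp only [normSq_mul, normSq_ofReal, star_def, normSq_conj,
      normSq_eq_norm_sq (steeringPhase _ _ _), norm_steeringPhase]
    ring
  simp only [Fintype.sum_prod_type, h, ← Finset.mul_sum, ← Finset.sum_mul, vecEnorm_sq]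
  have hwindow := sum_normSq_windowDiff (M - L) L
  rw [Nat.add_sub_cancel' hLM.le] at hwindow
  rw [Fin.sum_univ_eq_sum_range (fun q => normSq (windowDiff (M - L) L q)), hwindow]

end SpatialSmoothing

theorem mse_single_source_spatial_smoothing_general (M L N : ℕ)
    (hL : 1 ≤ L) (hLM : L ≤ M - 1)
    (μ : ℝ) (s : Fin N → ℂ) (hs : s ≠ 0) (σ : ℝ) :
    (1 / 2 : ℂ) *
        (star (zvec M L N μ s) ⬝ᵥ (RSS M L N σ *ᵥ zvec M L N μ s))
      = ((σ ^ 2 : ℝ) : ℂ) / ((vecEnorm s : ℝ) : ℂ) ^ 2 *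
          ((min L (M - L) : ℕ) : ℂ) /
          (((M - L : ℕ) : ℂ) ^ 2 * ((L : ℕ) : ℂ) ^ 2) := by
  have hLM' : L < M := by omega
  rw [RSS, smul_mulVec, dotProduct_smul,
    star_dotProduct_mul_transpose_mulVec _ (conjTranspose_Mstack M L N),
    sum_normSq_Mstack_transpose_mulVec_zvec hL hLM']
  have hd : ((M - L : ℕ) : ℂ) ≠ 0 := by norm_cast; omega
  have hL' : (L : ℂ) ≠ 0 := by norm_cast; omega
  have hs' : (vecEnorm s : ℂ) ≠ 0 := ofReal_ne_zero.2 (vecEnorm_ne_zero hs)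
  simp only [smul_eq_mul, ofReal_mul, ofReal_pow, ofReal_inv, ofReal_natCast, Nat.cast_mul,
    Nat.cast_ofNat]
  field_simp
  push_cast
  ring

/-- **Theorem 3 (1-D exact form).** The first-order MSE expression of 1-D Standard
ESPRIT with spatial smoothing evaluates exactly to
`(1/2) zᴴ R_SS z = (σ²/‖s‖²) · min{L, M-L} / ((M-L)² L²)`. -/
theorem mse_single_source_spatial_smoothing (M L N : ℕ)
    (hL : 1 ≤ L) (hLM : L ≤ M - 1) (hm : 2 ≤ M - L + 1) (hN : 1 ≤ N)
    (μ : ℝ) (s : Fin N → ℂ) (hs : s ≠ 0) (σ : ℝ) (hσ : 0 < σ) :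
    (1 / 2 : ℂ) *
        (star (zvec M L N μ s) ⬝ᵥ (RSS M L N σ *ᵥ zvec M L N μ s))
      = ((σ ^ 2 : ℝ) : ℂ) / ((vecEnorm s : ℝ) : ℂ) ^ 2 *
          ((min L (M - L) : ℕ) : ℂ) /
          (((M - L : ℕ) : ℂ) ^ 2 * ((L : ℕ) : ℂ) ^ 2) :=
  mse_single_source_spatial_smoothing_general M L N hL hLM μ s hs σ
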